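/- Let H be the Marchenko–Pastur law with γ > 1 and σ > 0. If ρ ∈ (0, 1/λ₊) satisfies ρ² ∫ s/((1 − ρs)²(s + σ²)) dH(s) = ∫ 1/(s(s + σ²)) dH(s), then ρ ≥ 1/(2λ₊), and the quantity ε²_{σ,ols} := ∫ σ⁴/((1 − ρs)²(s + σ²)) dH(s) satisfies ε_σ² < ε²_{σ,ols} ≤ (4λ₊²/λ₋²) ε_σ², where ε_σ² = ∫ σ⁴/(s + σ²) dH(s). -/

import Mathlib

open MeasureTheory Real Filter

/-- Lower edge `λ₋ = (1 − 1/√γ)²` of the Marchenko–Pastur law. -/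
noncomputable def lamM (γ : ℝ) : ℝ := (1 - 1 / Real.sqrt γ) ^ 2

/-- Upper edge `λ₊ = (1 + 1/√γ)²` of the Marchenko–Pastur law. -/
noncomputable def lamP (γ : ℝ) : ℝ := (1 + 1 / Real.sqrt γ) ^ 2

/-- The Marchenko–Pastur law with aspect ratio `γ > 1`:
`dH(s) = (γ/(2π))·√((λ₊ − s)(s − λ₋))/s · 𝟙_{[λ₋,λ₊]}(s) ds`. -/
noncomputable def MPlaw (γ : ℝ) : Measure ℝ :=
  MeasureTheory.volume.withDensity fun s =>
    ENNReal.ofReal (if lamM γ ≤ s ∧ s ≤ lamP γ then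
      γ / (2 * Real.pi) * Real.sqrt ((lamP γ - s) * (s - lamM γ)) / s else 0)

/-!
All that is used about `H` is that it is a nonzero finite measure carried by `[λ₋, λ₊]` with
`λ₋ > 0`. Put `t = ρs`, so `t ∈ (0, 1)` on the support. The left integrand of the defining
equation is `(t / (1 - t))²` times the right one; if `ρλ₊ < 1/2` then `t < 1 - t` throughout and
the equation fails strictly. The lower bound on `ε²_{σ,ols}` is `(1 - t)² < 1`. For the upper
bound, `σ⁴ ≤ (σ⁴/λ₋) s` and `1/s ≤ 1/λ₋` on the support give
`ρ² ε²_{σ,ols} ≤ (σ⁴/λ₋) ∫ 1/(s(s + σ²)) dH ≤ ε_σ²/λ₋²`, and `1/ρ² ≤ 4λ₊²`.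
-/

open Set

lemma integral_lt_integral_of_ae_lt {α : Type*} [MeasurableSpace α] {μ : Measure α} [NeZero μ]
    {f g : α → ℝ} (hf : Integrable f μ) (hg : Integrable g μ) (hfg : ∀ᵐ x ∂μ, f x < g x) :
    ∫ x, f x ∂μ < ∫ x, g x ∂μ := by
  have hsupp : (Function.support fun x => g x - f x) =ᵐ[μ] univ :=
    ae_eq_univ.2 <| hfg.mono fun x hx => (sub_pos.2 hx).ne'
  have hpos : 0 < ∫ x, g x - f x ∂μ := by
    rw [integral_pos_iff_support_of_nonneg_ae (hfg.mono fun x hx => (sub_pos.2 hx).le)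
      (hg.sub hf), measure_congr hsupp]
    exact Measure.measure_univ_pos.2 (NeZero.ne μ)
  rw [integral_sub hg hf] at hpos
  linarith

section SupportedOnIcc

variable {μ : Measure ℝ} {a b ρ σ : ℝ}

lemma mul_mem_Ioo_of_mem_Icc (ha : 0 < a) (hρ : ρ ∈ Ioo 0 (1 / b)) {s : ℝ} (hs : s ∈ Icc a b) :
    ρ * s ∈ Ioo 0 1 := by
  have hb : 0 < b := ha.trans_le (hs.1.trans hs.2)
  refine ⟨mul_pos hρ.1 (ha.trans_le hs.1), ?_⟩
  calc ρ * s ≤ ρ * b := by gcongr; exacts [hρ.1.le, hs.2]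
    _ < 1 := (lt_div_iff₀ hb).1 hρ.2

lemma one_sub_mul_sq_mul_add_sq_pos (ha : 0 < a) (hρ : ρ ∈ Ioo 0 (1 / b)) {s : ℝ}
    (hs : s ∈ Icc a b) : 0 < (1 - ρ * s) ^ 2 * (s + σ ^ 2) := by
  have hs0 := ha.trans_le hs.1
  exact mul_pos (pow_pos (sub_pos.2 (mul_mem_Ioo_of_mem_Icc ha hρ hs).2) 2) (by positivity)

variable [IsFiniteMeasure μ]

lemma integrable_div_of_ae_mem_Icc (hμ : ∀ᵐ s ∂μ, s ∈ Icc a b) {p q : ℝ → ℝ}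
    (hp : Continuous p) (hq : Continuous q) (hq0 : ∀ s ∈ Icc a b, q s ≠ 0) :
    Integrable (fun s => p s / q s) μ := by
  rw [← Measure.restrict_eq_self_of_ae_mem hμ]
  exact (hp.continuousOn.div hq.continuousOn hq0).integrableOn_compact isCompact_Icc

lemma integrable_div_one_sub_mul_sq_mul_add_sq (ha : 0 < a) (hμ : ∀ᵐ s ∂μ, s ∈ Icc a b)
    (hρ : ρ ∈ Ioo 0 (1 / b)) {p : ℝ → ℝ} (hp : Continuous p) :
    Integrable (fun s => p s / ((1 - ρ * s) ^ 2 * (s + σ ^ 2))) μ :=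
  integrable_div_of_ae_mem_Icc hμ hp (by fun_prop) fun _ hs =>
    (one_sub_mul_sq_mul_add_sq_pos ha hρ hs).ne'

lemma integrable_pow_div_add_sq (ha : 0 < a) (hμ : ∀ᵐ s ∂μ, s ∈ Icc a b) :
    Integrable (fun s => σ ^ 4 / (s + σ ^ 2)) μ :=
  integrable_div_of_ae_mem_Icc hμ continuous_const (by fun_prop) fun s hs =>
    (by have := ha.trans_le hs.1; positivity)

lemma integrable_one_div_mul_add_sq (ha : 0 < a) (hμ : ∀ᵐ s ∂μ, s ∈ Icc a b) :
    Integrable (fun s => 1 / (s * (s + σ ^ 2))) μ :=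
  integrable_div_of_ae_mem_Icc hμ continuous_const (by fun_prop) fun s hs =>
    (by have := ha.trans_le hs.1; positivity)

lemma one_div_two_mul_le_of_sq_mul_integral_eq [NeZero μ] (ha : 0 < a)
    (hμ : ∀ᵐ s ∂μ, s ∈ Icc a b) (hρ : ρ ∈ Ioo 0 (1 / b))
    (heq : ρ ^ 2 * ∫ s, s / ((1 - ρ * s) ^ 2 * (s + σ ^ 2)) ∂μ
      = ∫ s, 1 / (s * (s + σ ^ 2)) ∂μ) :
    1 / (2 * b) ≤ ρ := by
  by_contra! hρ_lt
  have hb : 0 < b := one_div_pos.1 (hρ.1.trans hρ.2)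
  have hρb : ρ * b < 1 / 2 := by
    rw [lt_div_iff₀ (by positivity)] at hρ_lt
    linarith
  suffices ρ ^ 2 * ∫ s, s / ((1 - ρ * s) ^ 2 * (s + σ ^ 2)) ∂μ
      < ∫ s, 1 / (s * (s + σ ^ 2)) ∂μ from this.ne heq
  rw [← integral_const_mul]
  refine integral_lt_integral_of_ae_lt
    ((integrable_div_one_sub_mul_sq_mul_add_sq ha hμ hρ continuous_id).const_mul (ρ ^ 2))
    (integrable_one_div_mul_add_sq ha hμ) ?_
  filter_upwards [hμ] with s hs
  obtain ⟨hρs0, hρs1⟩ := mul_mem_Ioo_of_mem_Icc ha hρ hs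
  have hs0 : 0 < s := ha.trans_le hs.1
  have hρs : ρ * s < 1 - ρ * s := by
    nlinarith [mul_le_mul_of_nonneg_left hs.2 hρ.1.le]
  calc ρ ^ 2 * (s / ((1 - ρ * s) ^ 2 * (s + σ ^ 2)))
      = (ρ * s) ^ 2 / (1 - ρ * s) ^ 2 * (1 / (s * (s + σ ^ 2))) := by field_simp
    _ < 1 * (1 / (s * (s + σ ^ 2))) := by
        gcongr
        rw [div_lt_one (by positivity)]
        exact pow_lt_pow_left₀ hρs hρs0.le two_ne_zero
    _ = 1 / (s * (s + σ ^ 2)) := one_mul _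

lemma integral_lt_integral_div_one_sub_mul_sq [NeZero μ] (ha : 0 < a)
    (hμ : ∀ᵐ s ∂μ, s ∈ Icc a b) (hρ : ρ ∈ Ioo 0 (1 / b)) (hσ : σ ≠ 0) :
    ∫ s, σ ^ 4 / (s + σ ^ 2) ∂μ < ∫ s, σ ^ 4 / ((1 - ρ * s) ^ 2 * (s + σ ^ 2)) ∂μ := by
  refine integral_lt_integral_of_ae_lt (integrable_pow_div_add_sq ha hμ)
    (integrable_div_one_sub_mul_sq_mul_add_sq ha hμ hρ continuous_const) ?_
  filter_upwards [hμ] with s hs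
  obtain ⟨hρs0, hρs1⟩ := mul_mem_Ioo_of_mem_Icc ha hρ hs
  have hs0 : 0 < s := ha.trans_le hs.1
  have hsq : (1 - ρ * s) ^ 2 < 1 := pow_lt_one₀ (by linarith) (by linarith) two_ne_zero
  exact div_lt_div_of_pos_left (by positivity) (one_sub_mul_sq_mul_add_sq_pos ha hρ hs)
    (mul_lt_of_lt_one_left (by positivity) hsq)

lemma sq_mul_integral_div_one_sub_mul_sq_le (ha : 0 < a) (hμ : ∀ᵐ s ∂μ, s ∈ Icc a b)
    (hρ : ρ ∈ Ioo 0 (1 / b)) (hσ : σ ≠ 0)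
    (heq : ρ ^ 2 * ∫ s, s / ((1 - ρ * s) ^ 2 * (s + σ ^ 2)) ∂μ
      = ∫ s, 1 / (s * (s + σ ^ 2)) ∂μ) :
    ρ ^ 2 * ∫ s, σ ^ 4 / ((1 - ρ * s) ^ 2 * (s + σ ^ 2)) ∂μ
      ≤ (∫ s, σ ^ 4 / (s + σ ^ 2) ∂μ) / a ^ 2 := by
  have hols : ∫ s, σ ^ 4 / ((1 - ρ * s) ^ 2 * (s + σ ^ 2)) ∂μ
      ≤ σ ^ 4 / a * ∫ s, s / ((1 - ρ * s) ^ 2 * (s + σ ^ 2)) ∂μ := by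
    rw [← integral_const_mul]
    refine integral_mono_ae (integrable_div_one_sub_mul_sq_mul_add_sq ha hμ hρ continuous_const)
      ((integrable_div_one_sub_mul_sq_mul_add_sq ha hμ hρ continuous_id).const_mul _) ?_
    filter_upwards [hμ] with s hs
    have hs0 : 0 < s := ha.trans_le hs.1
    calc σ ^ 4 / ((1 - ρ * s) ^ 2 * (s + σ ^ 2))
        = σ ^ 4 / s * (s / ((1 - ρ * s) ^ 2 * (s + σ ^ 2))) := by field_simp
      _ ≤ σ ^ 4 / a * (s / ((1 - ρ * s) ^ 2 * (s + σ ^ 2))) := by gcongr; exact hs.1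
  have hB : ∫ s, 1 / (s * (s + σ ^ 2)) ∂μ
      ≤ 1 / (a * σ ^ 4) * ∫ s, σ ^ 4 / (s + σ ^ 2) ∂μ := by
    rw [← integral_const_mul]
    refine integral_mono_ae (integrable_one_div_mul_add_sq ha hμ)
      ((integrable_pow_div_add_sq ha hμ).const_mul _) ?_
    filter_upwards [hμ] with s hs
    have hs0 : 0 < s := ha.trans_le hs.1
    calc 1 / (s * (s + σ ^ 2)) = 1 / (s * σ ^ 4) * (σ ^ 4 / (s + σ ^ 2)) := by field_simp
      _ ≤ 1 / (a * σ ^ 4) * (σ ^ 4 / (s + σ ^ 2)) := by gcongr; exact hs.1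
  calc ρ ^ 2 * ∫ s, σ ^ 4 / ((1 - ρ * s) ^ 2 * (s + σ ^ 2)) ∂μ
      ≤ ρ ^ 2 * (σ ^ 4 / a * ∫ s, s / ((1 - ρ * s) ^ 2 * (s + σ ^ 2)) ∂μ) := by gcongr
    _ = σ ^ 4 / a * ∫ s, 1 / (s * (s + σ ^ 2)) ∂μ := by rw [← heq]; ring
    _ ≤ σ ^ 4 / a * (1 / (a * σ ^ 4) * ∫ s, σ ^ 4 / (s + σ ^ 2) ∂μ) := by gcongr
    _ = (∫ s, σ ^ 4 / (s + σ ^ 2) ∂μ) / a ^ 2 := by field_simp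

lemma integral_div_one_sub_mul_sq_le [NeZero μ] (ha : 0 < a) (hμ : ∀ᵐ s ∂μ, s ∈ Icc a b)
    (hρ : ρ ∈ Ioo 0 (1 / b)) (hσ : σ ≠ 0)
    (heq : ρ ^ 2 * ∫ s, s / ((1 - ρ * s) ^ 2 * (s + σ ^ 2)) ∂μ
      = ∫ s, 1 / (s * (s + σ ^ 2)) ∂μ) :
    ∫ s, σ ^ 4 / ((1 - ρ * s) ^ 2 * (s + σ ^ 2)) ∂μ
      ≤ 4 * b ^ 2 / a ^ 2 * ∫ s, σ ^ 4 / (s + σ ^ 2) ∂μ := by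
  set ols := ∫ s, σ ^ 4 / ((1 - ρ * s) ^ 2 * (s + σ ^ 2)) ∂μ
  have hb : 0 < b := one_div_pos.1 (hρ.1.trans hρ.2)
  have hols : 0 ≤ ols := integral_nonneg_of_ae <| hμ.mono fun s hs =>
    (div_pos (by positivity) (one_sub_mul_sq_mul_add_sq_pos ha hρ hs)).le
  have h2bρ : 1 ≤ 2 * b * ρ := by
    have := one_div_two_mul_le_of_sq_mul_integral_eq ha hμ hρ heq
    rwa [div_le_iff₀ (by positivity), mul_comm] at this
  calc ols ≤ (2 * b * ρ) ^ 2 * ols := le_mul_of_one_le_left hols (one_le_pow₀ h2bρ)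
    _ = 4 * b ^ 2 * (ρ ^ 2 * ols) := by ring
    _ ≤ 4 * b ^ 2 * ((∫ s, σ ^ 4 / (s + σ ^ 2) ∂μ) / a ^ 2) := by
        gcongr; exact sq_mul_integral_div_one_sub_mul_sq_le ha hμ hρ hσ heq
    _ = 4 * b ^ 2 / a ^ 2 * ∫ s, σ ^ 4 / (s + σ ^ 2) ∂μ := by ring

end SupportedOnIcc

section MarchenkoPastur

variable {γ : ℝ}

lemma lamM_pos (hγ : γ ≠ 1) : 0 < lamM γ := by
  refine sq_pos_of_ne_zero ?_
  rw [sub_ne_zero, ne_comm, one_div, Ne, inv_eq_one, Real.sqrt_eq_one]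
  exact hγ

lemma lamM_lt_lamP (hγ : 0 < γ) : lamM γ < lamP γ := by
  have : 0 < 1 / √γ := by positivity
  unfold lamM lamP
  nlinarith

lemma ae_mem_Icc_MPlaw (γ : ℝ) : ∀ᵐ s ∂MPlaw γ, s ∈ Icc (lamM γ) (lamP γ) := by
  rw [Filter.Eventually, ofPred_mem_eq, mem_ae_iff, MPlaw,
    withDensity_apply _ measurableSet_Icc.compl]
  refine (setLIntegral_congr_fun (g := 0) measurableSet_Icc.compl fun s hs => ?_).trans
    lintegral_zero_fun
  rw [if_neg (hs ∘ mem_Icc.2), ENNReal.ofReal_zero, Pi.zero_apply]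

lemma isFiniteMeasure_MPlaw (hγ : γ ≠ 1) : IsFiniteMeasure (MPlaw γ) := by
  have hcont : ContinuousOn (fun s => γ / (2 * π) * √((lamP γ - s) * (s - lamM γ)) / s)
      (Icc (lamM γ) (lamP γ)) :=
    ContinuousOn.div (by fun_prop) continuousOn_id fun s hs => ((lamM_pos hγ).trans_le hs.1).ne'
  have : IsFiniteMeasure ((MPlaw γ).restrict (Icc (lamM γ) (lamP γ))) := by
    refine ⟨?_⟩
    rw [Measure.restrict_apply_univ, MPlaw, withDensity_apply _ measurableSet_Icc,
      setLIntegral_congr_fun measurableSet_Icc fun s hs =>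
        congrArg ENNReal.ofReal (if_pos (mem_Icc.1 hs))]
    exact (hcont.integrableOn_compact isCompact_Icc).setLIntegral_lt_top
  rwa [Measure.restrict_eq_self_of_ae_mem (ae_mem_Icc_MPlaw γ)] at this

lemma MPlaw_ne_zero (hγ : 0 < γ) : MPlaw γ ≠ 0 := by
  intro h
  rw [MPlaw, withDensity_eq_zero_iff <| Measurable.aemeasurable <| .ennreal_ofReal <|
    .ite measurableSet_Icc (by fun_prop) measurable_const] at h
  have hIoo : volume (Ioo (lamM γ) (lamP γ)) = 0 := by
    refine measure_mono_null (fun s hs => ?_) (ae_iff.1 h)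
    have hs0 : 0 < s := (sq_nonneg _).trans_lt hs.1
    have := Real.sqrt_pos.2 (mul_pos (sub_pos.2 hs.2) (sub_pos.2 hs.1))
    change ENNReal.ofReal (ite _ _ _) ≠ 0
    rw [if_pos ⟨hs.1.le, hs.2.le⟩, Ne, ENNReal.ofReal_eq_zero, not_le]
    positivity
  rw [Real.volume_Ioo, ENNReal.ofReal_eq_zero, sub_nonpos] at hIoo
  exact hIoo.not_gt (lamM_lt_lamP hγ)

end MarchenkoPastur

/-- If `ρ ∈ (0, 1/λ₊)` solves `ρ²∫ s/((1 − ρs)²(s + σ²)) dH = ∫ 1/(s(s + σ²)) dH`,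
then `ρ ≥ 1/(2λ₊)` and `ε²_{σ,ols} := ∫ σ⁴/((1 − ρs)²(s + σ²)) dH` satisfies
`ε_σ² < ε²_{σ,ols} ≤ (4λ₊²/λ₋²)·ε_σ²` for `ε_σ² = ∫ σ⁴/(s + σ²) dH`. -/
theorem stmt15 (γ σ ρ : ℝ) (hγ : 1 < γ) (hσ : 0 < σ)
    (hρ : ρ ∈ Set.Ioo 0 (1 / lamP γ))
    (heq : ρ ^ 2 * ∫ s, s / ((1 - ρ * s) ^ 2 * (s + σ ^ 2)) ∂(MPlaw γ)
      = ∫ s, 1 / (s * (s + σ ^ 2)) ∂(MPlaw γ)) :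
    1 / (2 * lamP γ) ≤ ρ ∧
    (∫ s, σ ^ 4 / (s + σ ^ 2) ∂(MPlaw γ))
      < (∫ s, σ ^ 4 / ((1 - ρ * s) ^ 2 * (s + σ ^ 2)) ∂(MPlaw γ)) ∧
    (∫ s, σ ^ 4 / ((1 - ρ * s) ^ 2 * (s + σ ^ 2)) ∂(MPlaw γ))
      ≤ (4 * lamP γ ^ 2 / lamM γ ^ 2) * ∫ s, σ ^ 4 / (s + σ ^ 2) ∂(MPlaw γ) := by
  have := isFiniteMeasure_MPlaw hγ.ne'
  have : NeZero (MPlaw γ) := ⟨MPlaw_ne_zero (zero_lt_one.trans hγ)⟩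
  have ha := lamM_pos hγ.ne'
  have hμ := ae_mem_Icc_MPlaw γ
  exact ⟨one_div_two_mul_le_of_sq_mul_integral_eq ha hμ hρ heq,
    integral_lt_integral_div_one_sub_mul_sq ha hμ hρ hσ.ne',
    integral_div_one_sub_mul_sq_le ha hμ hρ hσ.ne' heq⟩
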